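/- In the maximal regular family Q on A, for every a ∈ A, if r is the least element of {q ∈ Q : a ∈ q} and r₁ = ⋃{q ∈ Q : q ⊊ r}, then a ∉ r₁ and α(r₁) = a. -/

import Mathlib

/-! The argument is Zermelo's. If `p` is a nonempty member of a regular family with
`p = p₁ ∪ {α p₁}`, then any set `y ⊇ p₁` not containing `p` misses `α p₁`, so `p ∩ y ⊆ p₁`.
Applied to the least incomparable pair, this shows that members of any two regular families
are comparable; applied to `y = q ⊂ r`, it shows that `r₁` is the same whether computed in `Q`
or in a single regular family containing `r`. Then `r = r₁ ∪ {α r₁}` with `a ∈ r \ r₁`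
forces `a = α r₁`. -/

open Set

variable {A : Type*}

/-- A family `P` of subsets of `A` is *regular* (w.r.t. the choice-derived map `α`) if:
(1) it is linearly ordered by `⊆`; (2) every nonempty subfamily has a `⊆`-least element;
(3) `∅ ∈ P`; (4) every nonempty `p ∈ P` equals `p₁ ∪ {α p₁}` where `p₁ = ⋃ {q ∈ P : q ⊂ p}`. -/
def RegularFamily (α : Set A → A) (P : Set (Set A)) : Prop :=
  (∀ p ∈ P, ∀ q ∈ P, p ⊆ q ∨ q ⊆ p) ∧
  (∀ γ ⊆ P, γ.Nonempty → ∃ m ∈ γ, ∀ x ∈ γ, m ⊆ x) ∧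
  (∅ ∈ P) ∧
  (∀ p ∈ P, p.Nonempty →
    p = (⋃₀ {q ∈ P | q ⊂ p}) ∪ {α (⋃₀ {q ∈ P | q ⊂ p})})

def unionBelow (P : Set (Set A)) (p : Set A) : Set A := ⋃₀ {q ∈ P | q ⊂ p}

section

variable {α : Set A → A} {P P' : Set (Set A)} {p p' q x y : Set A}

lemma unionBelow_subset : unionBelow P p ⊆ p :=
  sUnion_subset fun _ hq => hq.2.subset

lemma subset_unionBelow (hq : q ∈ P) (hqp : q ⊂ p) : q ⊆ unionBelow P p :=
  subset_sUnion_of_mem ⟨hq, hqp⟩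

lemma unionBelow_mono (h : P ⊆ P') : unionBelow P p ⊆ unionBelow P' p :=
  sUnion_mono fun _ hq => ⟨h hq.1, hq.2⟩

namespace RegularFamily

lemma exists_least (hP : RegularFamily α P) {γ : Set (Set A)} (hγ : γ ⊆ P)
    (hne : γ.Nonempty) : ∃ m ∈ γ, ∀ x ∈ γ, m ⊆ x :=
  hP.2.1 γ hγ hne

lemma eq_insert (hP : RegularFamily α P) (hp : p ∈ P) (hne : p.Nonempty) :
    p = insert (α (unionBelow P p)) (unionBelow P p) := by
  rw [← union_singleton]
  exact hP.2.2.2 p hp hne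

lemma inter_subset_unionBelow (hP : RegularFamily α P) (hp : p ∈ P) (hne : p.Nonempty)
    (hy : unionBelow P p ⊆ y) (hpy : ¬p ⊆ y) : p ∩ y ⊆ unionBelow P p := by
  have hαy : α (unionBelow P p) ∉ y := fun h =>
    hpy (hP.eq_insert hp hne ▸ insert_subset h hy)
  rintro z ⟨hzp, hzy⟩
  rw [hP.eq_insert hp hne] at hzp
  exact hzp.resolve_left (ne_of_mem_of_not_mem hzy hαy)

lemma subset_or_subset (hP : RegularFamily α P) (hP' : RegularFamily α P')
    (hp : p ∈ P) (hp' : p' ∈ P') : p ⊆ p' ∨ p' ⊆ p := by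
  by_contra hbad
  obtain ⟨p₀, ⟨hp₀, y, hy, hp₀y⟩, hp₀_least⟩ :=
    hP.exists_least (γ := {x ∈ P | ∃ y ∈ P', ¬(x ⊆ y ∨ y ⊆ x)}) (fun _ hx => hx.1)
      ⟨p, hp, p', hp', hbad⟩
  obtain ⟨p'₀, ⟨hp'₀, hinc⟩, hp'₀_least⟩ :=
    hP'.exists_least (γ := {x ∈ P' | ¬(p₀ ⊆ x ∨ x ⊆ p₀)}) (fun _ hx => hx.1) ⟨y, hy, hp₀y⟩
  have hne : p₀.Nonempty :=
    nonempty_iff_ne_empty.2 fun h => hinc (Or.inl (h ▸ empty_subset _))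
  have hne' : p'₀.Nonempty :=
    nonempty_iff_ne_empty.2 fun h => hinc (Or.inr (h ▸ empty_subset _))
  have hs : unionBelow P p₀ ⊆ p'₀ := sUnion_subset fun q ⟨hq, hqp₀⟩ => by
    by_contra hqp'₀
    refine hqp₀.not_subset (hp₀_least q ⟨hq, p'₀, hp'₀, fun h => ?_⟩)
    exact hinc (Or.inr ((h.resolve_left hqp'₀).trans hqp₀.subset))
  have ht : unionBelow P' p'₀ ⊆ p₀ := sUnion_subset fun q ⟨hq, hqp'₀⟩ => by
    by_contra hqp₀
    refine hqp'₀.not_subset (hp'₀_least q ⟨hq, fun h => ?_⟩)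
    exact hinc (Or.inl ((h.resolve_right hqp₀).trans hqp'₀.subset))
  have hts : unionBelow P' p'₀ ⊆ unionBelow P p₀ :=
    (subset_inter ht unionBelow_subset).trans
      (hP.inter_subset_unionBelow hp₀ hne hs fun h => hinc (Or.inl h))
  have hst : unionBelow P p₀ ⊆ unionBelow P' p'₀ :=
    (subset_inter hs unionBelow_subset).trans
      (hP'.inter_subset_unionBelow hp'₀ hne' ht fun h => hinc (Or.inr h))
  have hp₀p'₀ : p₀ = p'₀ := by
    rw [hP.eq_insert hp₀ hne, hP'.eq_insert hp'₀ hne', hst.antisymm hts]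
  exact hinc (Or.inl hp₀p'₀.subset)

lemma subset_unionBelow_of_ssubset (hP : RegularFamily α P) (hp : p ∈ P)
    (hx : ∀ q ∈ P, x ⊆ q ∨ q ⊆ x) (hxp : x ⊂ p) : x ⊆ unionBelow P p := by
  by_cases h : ∃ q ∈ P, q ⊂ p ∧ x ⊆ q
  · obtain ⟨q, hq, hqp, hxq⟩ := h
    exact hxq.trans (subset_unionBelow hq hqp)
  · push Not at h
    have hbelow : unionBelow P p ⊆ x :=
      sUnion_subset fun q ⟨hq, hqp⟩ => (hx q hq).resolve_left (h q hq hqp)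
    calc x = p ∩ x := (inter_eq_right.2 hxp.subset).symm
      _ ⊆ unionBelow P p :=
        hP.inter_subset_unionBelow hp (nonempty_of_ssubset' hxp) hbelow hxp.not_subset

lemma unionBelow_union_eq (hP : RegularFamily α P) (hp : p ∈ P) :
    unionBelow {x | ∃ P, RegularFamily α P ∧ x ∈ P} p = unionBelow P p := by
  refine (sUnion_subset ?_).antisymm (unionBelow_mono fun x hx => ⟨P, hP, hx⟩)
  rintro q ⟨⟨P', hP', hq⟩, hqp⟩
  exact hP.subset_unionBelow_of_ssubset hp (fun _ hq' => hP'.subset_or_subset hP hq hq') hqp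

end RegularFamily

end

theorem alpha_hits_a_general
    (α : Set A → A)
    (Q : Set (Set A)) (hQdef : Q = {p : Set A | ∃ P : Set (Set A), RegularFamily α P ∧ p ∈ P})
    (a : A) (r : Set A) (hr : r ∈ {q ∈ Q | a ∈ q})
    (hrleast : ∀ q ∈ {q ∈ Q | a ∈ q}, r ⊆ q) :
    a ∉ ⋃₀ {q ∈ Q | q ⊂ r} ∧ α (⋃₀ {q ∈ Q | q ⊂ r}) = a := by
  subst hQdef
  obtain ⟨⟨P, hP, hrP⟩, har⟩ := hr
  have ha : a ∉ ⋃₀ {q ∈ _ | q ⊂ r} := fun ⟨q, ⟨hq, hqr⟩, haq⟩ =>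
    hqr.not_subset (hrleast q ⟨hq, haq⟩)
  have hbelow : ⋃₀ {q ∈ _ | q ⊂ r} = unionBelow P r := hP.unionBelow_union_eq hrP
  rw [hbelow] at ha ⊢
  rw [hP.eq_insert hrP ⟨a, har⟩] at har
  exact ⟨ha, (har.resolve_right ha).symm⟩

theorem alpha_hits_a
    (φ : Set A → A) (hφ : ∀ X : Set A, X.Nonempty → φ X ∈ X)
    (α : Set A → A) (hα : ∀ X : Set A, α X = φ Xᶜ)
    (Q : Set (Set A)) (hQdef : Q = {p : Set A | ∃ P : Set (Set A), RegularFamily α P ∧ p ∈ P})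
    (a : A) (r : Set A) (hr : r ∈ {q ∈ Q | a ∈ q})
    (hrleast : ∀ q ∈ {q ∈ Q | a ∈ q}, r ⊆ q) :
    a ∉ ⋃₀ {q ∈ Q | q ⊂ r} ∧ α (⋃₀ {q ∈ Q | q ⊂ r}) = a :=
  alpha_hits_a_general α Q hQdef a r hr hrleast
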